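/- arXiv:1810.04727 — 3 statements merged into one kernel-verified Lean document; each statement's English description precedes it below -/
import Mathlib

section
/- For any genomic tableau T of shape λ, the regularization algorithm terminates, and its output reg(T) is a quasiYamanouchi genomic tableau of shape λ; that is, regularization is a well-defined map reg : Gen(λ) → QYGen(λ). -/
open scoped Classical

/-- The cell `x = (row, column)` (0-indexed, English orientation) lies in the Young diagram
whose `r`-th row has length `lam r`. -/
def InShape (lam : ℕ → ℕ) (x : ℕ × ℕ) : Prop := x.2 < lam x.1

/-- `lam : ℕ → ℕ` is the row-length function of a partition: weakly decreasing and
eventually zero. -/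
def IsPartitionFn (lam : ℕ → ℕ) : Prop := Antitone lam ∧ ∃ N, ∀ n, N ≤ n → lam n = 0

/-- A genomic tableau of shape `lam`: a semistandard filling (positive entries, rows weakly
increasing left-to-right, columns strictly increasing top-to-bottom) together with, for each
`i`, a partition of the boxes labeled `i` into genes, encoded by the relation `sameGene`.
Boxes in a common gene share their entry; if a gene has boxes (necessarily with a common
entry) in columns `c₁ < c₃`, then every box with the same entry in an intervening column
belongs to the same gene; and no gene has two boxes in a common row.  Entries and the
relation are normalized (to `0`, resp. `False`) outside the shape so that equality of
structures agrees with equality of tableaux. -/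
structure GenomicTableau (lam : ℕ → ℕ) where
  entry : ℕ × ℕ → ℕ
  sameGene : ℕ × ℕ → ℕ × ℕ → Prop
  entry_pos : ∀ x, InShape lam x → 0 < entry x
  entry_zero : ∀ x, ¬ InShape lam x → entry x = 0
  row_weak : ∀ r c₁ c₂, c₁ ≤ c₂ → InShape lam (r, c₂) → entry (r, c₁) ≤ entry (r, c₂)
  col_strict : ∀ r₁ r₂ c, r₁ < r₂ → InShape lam (r₂, c) → entry (r₁, c) < entry (r₂, c)
  sameGene_mem : ∀ x y, sameGene x y → InShape lam x ∧ InShape lam y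
  sameGene_refl : ∀ x, InShape lam x → sameGene x x
  sameGene_symm : ∀ x y, sameGene x y → sameGene y x
  sameGene_trans : ∀ x y z, sameGene x y → sameGene y z → sameGene x z
  sameGene_entry : ∀ x y, sameGene x y → entry x = entry y
  sameGene_interval : ∀ x y z, sameGene x z → InShape lam y → entry y = entry x →
    x.2 < y.2 → y.2 < z.2 → sameGene x y
  sameGene_row : ∀ x y, sameGene x y → x.1 = y.1 → x = y

/-- `x` is the leftmost box of its gene in the genomic tableau `T`. -/
def IsGeneLeader {lam : ℕ → ℕ} (T : GenomicTableau lam) (x : ℕ × ℕ) : Prop :=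
  InShape lam x ∧ ∀ y, T.sameGene x y → x.2 ≤ y.2

/-- The number of `(n+1)`-genes of `T` (counted via their leftmost boxes).  Thus `wt T` is
the weight of `T` as a weak composition indexed from `0`: the variable `x_n` records
`(n+1)`-genes. -/
noncomputable def wt {lam : ℕ → ℕ} (T : GenomicTableau lam) (n : ℕ) : ℕ :=
  {x | IsGeneLeader T x ∧ T.entry x = n + 1}.ncard

/-- The largest entry of the genomic tableau `T`. -/
noncomputable def maxEntry {lam : ℕ → ℕ} (T : GenomicTableau lam) : ℕ :=
  sSup {n | ∃ x, InShape lam x ∧ T.entry x = n}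

/-- The positive part of the weight of `T`: the list of nonzero components of `wt T`,
in order. -/
noncomputable def wtPos {lam : ℕ → ℕ} (T : GenomicTableau lam) : List ℕ :=
  ((List.range (maxEntry T)).map (wt T)).filter (fun e => decide (0 < e))

/-- The (strong) composition `β` refines `α` if `α` is obtained from `β` by summing
consecutive blocks. -/
def Refines (β α : List ℕ) : Prop :=
  ∃ L : List (List ℕ), L.flatten = β ∧ L.map List.sum = α

/-- The positive part of a weak composition `m`: the list of its nonzero values in order of
the index. -/
noncomputable def posPart (m : ℕ →₀ ℕ) : List ℕ :=
  (m.support.sort (· ≤ ·)).map (fun i => m i)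

/-- The fundamental quasisymmetric function `F_α`, a power series in variables indexed
by `ℕ`: the sum of `x^m` over all weak compositions `m` whose positive part refines `α`. -/
noncomputable def fundamentalF (α : List ℕ) : MvPowerSeries ℕ ℤ :=
  fun m : ℕ →₀ ℕ => if Refines (posPart m) α then 1 else 0

/-- The genomic Schur function `U_lam`: the coefficient of `x^m` is the number of genomic
tableaux of shape `lam` with weight `m`. -/
noncomputable def genomicSchur (lam : ℕ → ℕ) : MvPowerSeries ℕ ℤ :=
  fun m : ℕ →₀ ℕ => (Nat.card {T : GenomicTableau lam // ∀ n, wt T n = m n} : ℤ)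

/-- A genomic tableau is quasiYamanouchi if for every `i > 1` appearing in it, some
instance of `i` is weakly west of some instance of `i-1`. -/
def IsQY {lam : ℕ → ℕ} (T : GenomicTableau lam) : Prop :=
  ∀ i, 2 ≤ i → (∃ x, InShape lam x ∧ T.entry x = i) →
    ∃ x y, InShape lam x ∧ InShape lam y ∧
      T.entry x = i ∧ T.entry y = i - 1 ∧ x.2 ≤ y.2

/-- One step of the regularization algorithm: if `i ≥ 2` appears in `T` and every box
labeled `i` is strictly east of every box labeled `i-1`, replace every label `i` by `i-1`,
keeping the gene decomposition. -/
def RegStep {lam : ℕ → ℕ} (T T' : GenomicTableau lam) : Prop :=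
  ∃ i, 2 ≤ i ∧ (∃ x, InShape lam x ∧ T.entry x = i) ∧
    (∀ x y, InShape lam x → InShape lam y → T.entry x = i → T.entry y = i - 1 → y.2 < x.2) ∧
    (∀ x, T'.entry x = if T.entry x = i then i - 1 else T.entry x) ∧
    (∀ x y, T'.sameGene x y ↔ T.sameGene x y)

/-- An increasing tableau of shape `lam`: positive entries, strictly increasing along rows
and down columns, normalized to `0` outside the shape. -/
structure IncreasingTableau (lam : ℕ → ℕ) where
  entry : ℕ × ℕ → ℕ
  entry_pos : ∀ x, InShape lam x → 0 < entry x
  entry_zero : ∀ x, ¬ InShape lam x → entry x = 0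
  row_strict : ∀ r c₁ c₂, c₁ < c₂ → InShape lam (r, c₂) → entry (r, c₁) < entry (r, c₂)
  col_strict : ∀ r₁ r₂ c, r₁ < r₂ → InShape lam (r₂, c) → entry (r₁, c) < entry (r₂, c)

/-- The largest entry of the increasing tableau `T`. -/
noncomputable def maxEntryInc {lam : ℕ → ℕ} (T : IncreasingTableau lam) : ℕ :=
  sSup {n | ∃ x, InShape lam x ∧ T.entry x = n}

/-- An increasing tableau is gapless if its set of entries is `{1, …, n}` for some `n`. -/
def Gapless {lam : ℕ → ℕ} (T : IncreasingTableau lam) : Prop :=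
  ∀ i, 0 < i → i ≤ maxEntryInc T → ∃ x, InShape lam x ∧ T.entry x = i

/-- `i` is a descent of the increasing tableau `T` if some instance of `i` lies in a
strictly higher row than some instance of `i+1`. -/
def IsDescent {lam : ℕ → ℕ} (T : IncreasingTableau lam) (i : ℕ) : Prop :=
  ∃ x y, InShape lam x ∧ InShape lam y ∧ T.entry x = i ∧ T.entry y = i + 1 ∧ x.1 < y.1

/-- The descent composition of a gapless increasing tableau with entries `{1, …, n}`:
the lengths of the segments of the word `1 2 ⋯ n` cut after each descent. -/
noncomputable def descComp {lam : ℕ → ℕ} (T : IncreasingTableau lam) : List ℕ :=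
  let n := maxEntryInc T
  let ds := (((Finset.range n).filter fun i => IsDescent T i).sort (· ≤ ·)) ++ [n]
  (ds.zip (0 :: ds)).map fun p => p.1 - p.2

/-- A standard Young tableau, viewed as an increasing tableau: gapless with all entries
distinct (so the entries are `1, …, |lam|`, each exactly once). -/
def IsStandard {lam : ℕ → ℕ} (T : IncreasingTableau lam) : Prop :=
  Gapless T ∧ ∀ x y, InShape lam x → InShape lam y → T.entry x = T.entry y → x = y

/-- The column of the leftmost box of the gene of `x` in `T`. -/
noncomputable def leadCol {lam : ℕ → ℕ} (T : GenomicTableau lam) (x : ℕ × ℕ) : ℕ :=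
  sInf {c | ∃ y, T.sameGene x y ∧ y.2 = c}

/-- K-standardization `Φ`: order the genes of `T` by listing the `1`-genes left to right,
then the `2`-genes left to right, and so on; `kStd T x` is the (1-based) position of the
gene of `x` in this order (and `0` outside the shape). -/
noncomputable def kStd {lam : ℕ → ℕ} (T : GenomicTableau lam) (x : ℕ × ℕ) : ℕ :=
  if InShape lam x then
    {y | IsGeneLeader T y ∧ (T.entry y < T.entry x ∨
        (T.entry y = T.entry x ∧ y.2 ≤ leadCol T x))}.ncard
  else 0

/-- A semistandard tableau of shape `lam`, with positive entries, normalized to `0`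
outside the shape. -/
structure SemistandardTableau (lam : ℕ → ℕ) where
  entry : ℕ × ℕ → ℕ
  entry_pos : ∀ x, InShape lam x → 0 < entry x
  entry_zero : ∀ x, ¬ InShape lam x → entry x = 0
  row_weak : ∀ r c₁ c₂, c₁ ≤ c₂ → InShape lam (r, c₂) → entry (r, c₁) ≤ entry (r, c₂)
  col_strict : ∀ r₁ r₂ c, r₁ < r₂ → InShape lam (r₂, c) → entry (r₁, c) < entry (r₂, c)

/-- The number of boxes of `T` with entry `n+1` (matching the variable convention of
`wt`: the variable `x_n` records the entry `n+1`). -/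
noncomputable def contentOf {lam : ℕ → ℕ} (T : SemistandardTableau lam) (n : ℕ) : ℕ :=
  {x | InShape lam x ∧ T.entry x = n + 1}.ncard

/-- The Schur function `s_mu` as the generating function of semistandard tableaux of
shape `mu` by content. -/
noncomputable def schurFn (mu : ℕ → ℕ) : MvPowerSeries ℕ ℤ :=
  fun m : ℕ →₀ ℕ => (Nat.card {T : SemistandardTableau mu // ∀ n, contentOf T n = m n} : ℤ)

/-- The row-length function of the flag-shaped partition `(a, b, 1^k)`. -/
def flagShape (a b k : ℕ) : ℕ → ℕ :=
  fun r => if r = 0 then a else if r = 1 then b else if r < k + 2 then 1 else 0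

/-- The homogeneous component of degree `d` of a power series. -/
noncomputable def homComponent (d : ℕ) (f : MvPowerSeries ℕ ℤ) : MvPowerSeries ℕ ℤ :=
  fun m : ℕ →₀ ℕ => if (m.sum fun _ e => e) = d then MvPowerSeries.coeff m f else 0

/-- The complete homogeneous symmetric function `h_k` (`h_0 = 1`, and `h_k = 0` for
`k < 0`): the sum of all monomials of total degree `k`. -/
noncomputable def hSeries (k : ℤ) : MvPowerSeries ℕ ℤ :=
  fun m : ℕ →₀ ℕ => if ((m.sum fun _ e => e : ℕ) : ℤ) = k then 1 else 0

/-- The Schur function of an arbitrary (strong) composition `α`, via the Jacobi–Trudi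
determinant `s_α = det(h_{α_i - i + j})`. -/
noncomputable def schurComp (α : List ℕ) : MvPowerSeries ℕ ℤ :=
  Matrix.det (Matrix.of fun i j : Fin α.length =>
    hSeries ((α.get i : ℤ) - (i : ℕ) + (j : ℕ)))

/-- `e` lies in the `i`-th block (0-indexed) `M_{i+1}(α) = {α_1 + ⋯ + α_i + 1, …,
α_1 + ⋯ + α_{i+1}}` of the composition `α`. -/
def InBlock (α : List ℕ) (i : ℕ) (e : ℕ) : Prop :=
  (α.take i).sum < e ∧ e ≤ (α.take (i + 1)).sum

/-- The positive part of a weak composition of length `n`. -/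
noncomputable def posPartFin {n : ℕ} (m : Fin n →₀ ℕ) : List ℕ :=
  (List.ofFn fun k : Fin n => m k).filter (fun e => decide (0 < e))

/-- The fundamental quasisymmetric polynomial `F_α(x_1, …, x_n)` in `n` variables. -/
noncomputable def fundamentalFFin (n : ℕ) (α : List ℕ) : MvPowerSeries (Fin n) ℤ :=
  fun m : Fin n →₀ ℕ => if Refines (posPartFin m) α then 1 else 0

/-- The genomic Schur polynomial `U_lam(x_1, …, x_n)`: the generating function of genomic
tableaux with all entries at most `n`, by weight. -/
noncomputable def genomicSchurPoly (lam : ℕ → ℕ) (n : ℕ) : MvPowerSeries (Fin n) ℤ :=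
  fun m : Fin n →₀ ℕ =>
    (Nat.card {T : GenomicTableau lam //
      (∀ x, InShape lam x → T.entry x ≤ n) ∧ ∀ k : Fin n, wt T (k : ℕ) = m k} : ℤ)

/-! Every regularization step lowers the entry sum over the (finite) shape, so the process
terminates. Two steps from the same tableau can always be completed to a common tableau: steps
at labels `i` and `j` with `|i - j| ≥ 2` commute, while for `i = j + 1` lowering `j + 1` and then
`j` merges the labels `j - 1, j, j + 1`, which is also reached by lowering `j`, then `j + 1`,
then `j` again. Newman's lemma then makes the terminal tableaux, which are exactly the
quasiYamanouchi ones, unique. -/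

namespace Relation

variable {α : Type*} {r : α → α → Prop}

/-- Newman's lemma. -/
theorem join_of_locallyConfluent (hwf : WellFounded (flip r))
    (hlc : ∀ a b c, r a b → r a c → Join (ReflTransGen r) b c) {a b c : α}
    (hab : ReflTransGen r a b) (hac : ReflTransGen r a c) : Join (ReflTransGen r) b c := by
  induction a using hwf.induction generalizing b c with
  | _ a ih =>
  rcases hab.cases_head with rfl | ⟨b₁, hab₁, hb₁b⟩
  · exact ⟨c, hac, .refl⟩
  rcases hac.cases_head with rfl | ⟨c₁, hac₁, hc₁c⟩
  · exact ⟨b, .refl, hab⟩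
  obtain ⟨d, hb₁d, hc₁d⟩ := hlc a b₁ c₁ hab₁ hac₁
  obtain ⟨e, hbe, hde⟩ := ih b₁ hab₁ hb₁b hb₁d
  obtain ⟨f, hef, hcf⟩ := ih c₁ hac₁ (hc₁d.trans hde) hc₁c
  exact ⟨f, hbe.trans hef, hcf⟩

theorem existsUnique_normalForm_of_locallyConfluent (hwf : WellFounded (flip r))
    (hlc : ∀ a b c, r a b → r a c → Join (ReflTransGen r) b c) (a : α) :
    ∃! b, ReflTransGen r a b ∧ ∀ c, ¬ r b c := by
  obtain ⟨b, hab, hmin⟩ := hwf.has_min {b | ReflTransGen r a b} ⟨a, .refl⟩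
  refine ⟨b, ⟨hab, fun c hbc => hmin c (hab.tail hbc) hbc⟩, ?_⟩
  rintro b' ⟨hab', hb'⟩
  obtain ⟨d, hb'd, hbd⟩ := join_of_locallyConfluent hwf hlc hab' hab
  have hb'_eq : b' = d := hb'd.cases_head.resolve_right fun ⟨c, h, _⟩ => hb' c h
  have hb_eq : b = d := hbd.cases_head.resolve_right fun ⟨c, h, _⟩ => hmin c (hab.tail h) h
  rw [hb'_eq, hb_eq]

end Relation

open Relation

theorem IsPartitionFn.finite_inShape {lam : ℕ → ℕ} (hlam : IsPartitionFn lam) :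
    {x | InShape lam x}.Finite := by
  obtain ⟨N, hN⟩ := hlam.2
  refine ((Set.finite_Iio N).prod (Set.finite_Iio (lam 0))).subset fun x hx => ⟨?_, ?_⟩
  · by_contra hxN
    have hx : x.2 < lam x.1 := hx
    have := hN x.1 (not_lt.1 hxN)
    omega
  · exact lt_of_lt_of_le hx (hlam.1 (Nat.zero_le _))

namespace GenomicTableau

variable {lam : ℕ → ℕ} {T : GenomicTableau lam} {i j : ℕ}

theorem ext {T U : GenomicTableau lam} (hentry : T.entry = U.entry)
    (hgene : T.sameGene = U.sameGene) : T = U := by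
  cases T; cases U; cases hentry; cases hgene; rfl

def Occurs (T : GenomicTableau lam) (a : ℕ) : Prop := ∃ x, InShape lam x ∧ T.entry x = a

def StrictlyEast (T : GenomicTableau lam) (a b : ℕ) : Prop :=
  ∀ x y, InShape lam x → InShape lam y → T.entry x = a → T.entry y = b → y.2 < x.2

theorem StrictlyEast.trans {a b c : ℕ} (hab : T.StrictlyEast a b) (hbc : T.StrictlyEast b c)
    (hb : T.Occurs b) : T.StrictlyEast a c := by
  obtain ⟨w, hw, hwb⟩ := hb
  intro x y hx hy hxa hyc
  exact (hbc w y hw hy hwb hyc).trans (hab x w hx hw hxa hwb)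

def CanLower (T : GenomicTableau lam) (i : ℕ) : Prop :=
  2 ≤ i ∧ T.Occurs i ∧ T.StrictlyEast i (i - 1)

def lower (T : GenomicTableau lam) (i : ℕ) (h : T.CanLower i) : GenomicTableau lam where
  entry x := if T.entry x = i then i - 1 else T.entry x
  sameGene := T.sameGene
  entry_pos x hx := by
    have := T.entry_pos x hx
    have := h.1
    split_ifs <;> omega
  entry_zero x hx := by
    have := T.entry_zero x hx
    have := h.1
    split_ifs <;> omega
  row_weak r c₁ c₂ hc hsh := by
    have := T.row_weak r c₁ c₂ hc hsh
    split_ifs <;> omega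
  col_strict r₁ r₂ c hr hsh := by
    have hlt := T.col_strict r₁ r₂ c hr hsh
    have := h.1
    split_ifs with h₁ h₂ h₂
    · omega
    · omega
    · -- `(r₁, c)` cannot hold `i - 1`: it shares its column with the `i` below it
      by_cases hin : InShape lam (r₁, c)
      · have := h.2.2 (r₂, c) (r₁, c) hsh hin h₂
        omega
      · have := T.entry_zero _ hin
        omega
    · omega
  sameGene_mem := T.sameGene_mem
  sameGene_refl := T.sameGene_refl
  sameGene_symm := T.sameGene_symm
  sameGene_trans := T.sameGene_trans
  sameGene_entry x y hxy := by simp only [T.sameGene_entry x y hxy]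
  sameGene_interval x y z hxz hy hyx hxy hyz := by
    obtain ⟨hx, hz⟩ := T.sameGene_mem x z hxz
    have hzx := T.sameGene_entry x z hxz
    refine T.sameGene_interval x y z hxz hy ?_ hxy hyz
    split_ifs at hyx with h₁ h₂ h₂
    · omega
    · have := h.2.2 y z hy hz h₁ (by omega)
      omega
    · have := h.2.2 x y hx hy h₂ hyx
      omega
    · exact hyx
  sameGene_row := T.sameGene_row

theorem lower_entry (h : T.CanLower i) (x : ℕ × ℕ) :
    (T.lower i h).entry x = if T.entry x = i then i - 1 else T.entry x := rfl

theorem lower_entry_eq_iff (h : T.CanLower i) {x : ℕ × ℕ} {k : ℕ} :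
    (T.lower i h).entry x = k ↔ T.entry x = k ∧ k ≠ i ∨ T.entry x = i ∧ k = i - 1 := by
  have := h.1
  rw [lower_entry]
  split_ifs <;> omega

theorem regStep_lower (h : T.CanLower i) : RegStep T (T.lower i h) :=
  ⟨i, h.1, h.2.1, h.2.2, fun _ => rfl, fun _ _ => Iff.rfl⟩

theorem regStep_iff_exists_lower {U : GenomicTableau lam} :
    RegStep T U ↔ ∃ i h, U = T.lower i h := by
  refine ⟨fun ⟨i, hi, hocc, heast, hentry, hgene⟩ => ⟨i, ⟨hi, hocc, heast⟩, ?_⟩, ?_⟩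
  · exact ext (funext hentry) (funext₂ fun x y => propext (hgene x y))
  · rintro ⟨i, h, rfl⟩
    exact regStep_lower h

theorem isQY_iff_forall_not_regStep : IsQY T ↔ ∀ U, ¬ RegStep T U := by
  constructor
  · rintro hqy U ⟨i, hi, hocc, heast, -, -⟩
    obtain ⟨x, y, hx, hy, hxi, hyi, hxy⟩ := hqy i hi hocc
    exact absurd (heast x y hx hy hxi hyi) (not_lt.2 hxy)
  · intro hnf i hi hocc
    by_contra hnot
    push Not at hnot
    exact hnf _ (regStep_lower (i := i) ⟨hi, hocc, hnot⟩)

theorem sum_entry_lt_of_regStep {U : GenomicTableau lam} (h : RegStep T U)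
    {s : Finset (ℕ × ℕ)} (hs : ∀ x, InShape lam x → x ∈ s) :
    ∑ x ∈ s, U.entry x < ∑ x ∈ s, T.entry x := by
  obtain ⟨i, hi, ⟨x, hx, hxi⟩, -, hentry, -⟩ := h
  refine Finset.sum_lt_sum (fun y _ => ?_) ⟨x, hs x hx, ?_⟩ <;>
    · rw [hentry]
      split_ifs <;> omega

theorem wellFounded_flip_regStep (hlam : IsPartitionFn lam) :
    WellFounded (flip (RegStep (lam := lam))) :=
  have hfin := hlam.finite_inShape
  Subrelation.wf (fun h => sum_entry_lt_of_regStep h fun _ => hfin.mem_toFinset.2)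
    (InvImage.wf (fun T : GenomicTableau lam => ∑ x ∈ hfin.toFinset, T.entry x) wellFounded_lt)

theorem canLower_lower_of_far (hi : T.CanLower i) (hj : T.CanLower j)
    (hij : j + 1 < i ∨ i + 1 < j) : (T.lower i hi).CanLower j := by
  have := hi.1
  have hsame : ∀ x, ∀ k, (k = j ∨ k = j - 1) → ((T.lower i hi).entry x = k ↔ T.entry x = k) :=
    fun x k hk => by rw [lower_entry_eq_iff]; omega
  obtain ⟨hj2, ⟨w, hw, hwj⟩, heast⟩ := hj
  refine ⟨hj2, ⟨w, hw, (hsame w j (.inl rfl)).2 hwj⟩, fun x y hx hy hxj hyj => ?_⟩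
  exact heast x y hx hy ((hsame x j (.inl rfl)).1 hxj) ((hsame y _ (.inr rfl)).1 hyj)

theorem join_lower_of_far (hi : T.CanLower i) (hj : T.CanLower j) (hij : j + 1 < i) :
    Join (ReflTransGen RegStep) (T.lower i hi) (T.lower j hj) := by
  have hij' := canLower_lower_of_far hi hj (.inl hij)
  have hji' := canLower_lower_of_far hj hi (.inr hij)
  have hcomm : (T.lower j hj).lower i hji' = (T.lower i hi).lower j hij' := by
    refine ext (funext fun x => ?_) rfl
    simp only [lower_entry]
    split_ifs <;> omega
  exact ⟨_, .single (regStep_lower hij'), hcomm ▸ .single (regStep_lower hji')⟩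

theorem canLower_lower_succ_pred (hi : T.CanLower (j + 1)) (hj : T.CanLower j) :
    (T.lower (j + 1) hi).CanLower j := by
  obtain ⟨x, hx, hxi⟩ := hi.2.1
  refine ⟨hj.1, ⟨x, hx, (lower_entry_eq_iff hi).2 (.inr ⟨hxi, rfl⟩)⟩, ?_⟩
  intro x y hx hy hxj hyj
  have heast := hi.2.2.trans hj.2.2 hj.2.1
  have := hj.1
  simp only [lower_entry_eq_iff] at hxj hyj
  have hyj : T.entry y = j - 1 := by omega
  rcases hxj with ⟨hxj, -⟩ | ⟨hxi, -⟩
  · exact hj.2.2 x y hx hy hxj hyj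
  · exact heast x y hx hy hxi hyj

theorem canLower_lower_pred_succ (hi : T.CanLower (j + 1)) (hj : T.CanLower j) :
    (T.lower j hj).CanLower (j + 1) := by
  have := hj.1
  obtain ⟨x, hx, hxi⟩ := hi.2.1
  refine ⟨hi.1, ⟨x, hx, (lower_entry_eq_iff hj).2 (.inl ⟨hxi, by omega⟩)⟩, ?_⟩
  intro x y _ _ _ hyj
  simp only [lower_entry_eq_iff] at hyj
  omega

theorem canLower_lower_lower_pred (hi : T.CanLower (j + 1)) (hj : T.CanLower j)
    (hj' : (T.lower j hj).CanLower (j + 1)) : ((T.lower j hj).lower (j + 1) hj').CanLower j := by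
  obtain ⟨x, hx, hxi⟩ := hi.2.1
  have := hj.1
  refine ⟨hj.1, ⟨x, hx, ?_⟩, ?_⟩
  · simp only [lower_entry_eq_iff]
    omega
  intro x y hx hy hxj hyj
  have heast := hi.2.2.trans hj.2.2 hj.2.1
  simp only [lower_entry_eq_iff] at hxj hyj
  have hxi : T.entry x = j + 1 := by omega
  have hyj : T.entry y = j - 1 ∨ T.entry y = j := by omega
  rcases hyj with hyj | hyj
  · exact heast x y hx hy hxi hyj
  · exact hi.2.2 x y hx hy hxi hyj

theorem join_lower_succ (hi : T.CanLower (j + 1)) (hj : T.CanLower j) :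
    Join (ReflTransGen RegStep) (T.lower (j + 1) hi) (T.lower j hj) := by
  have hij := canLower_lower_succ_pred hi hj
  have hji := canLower_lower_pred_succ hi hj
  have hjij := canLower_lower_lower_pred hi hj hji
  have hmerge :
      ((T.lower j hj).lower (j + 1) hji).lower j hjij = (T.lower (j + 1) hi).lower j hij := by
    refine ext (funext fun x => ?_) rfl
    simp only [lower_entry]
    split_ifs <;> omega
  exact ⟨_, .single (regStep_lower hij),
    hmerge ▸ .head (regStep_lower hji) (.single (regStep_lower hjij))⟩

theorem regStep_locallyConfluent (T A B : GenomicTableau lam) (hA : RegStep T A)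
    (hB : RegStep T B) : Join (ReflTransGen RegStep) A B := by
  obtain ⟨i, hi, rfl⟩ := regStep_iff_exists_lower.1 hA
  obtain ⟨j, hj, rfl⟩ := regStep_iff_exists_lower.1 hB
  clear hA hB
  wlog hji : j < i generalizing i j
  · rcases (not_lt.1 hji).eq_or_lt with rfl | hij
    · exact ⟨_, .refl, .refl⟩
    · obtain ⟨D, hjD, hiD⟩ := this j hj i hi hij
      exact ⟨D, hiD, hjD⟩
  rcases (Nat.succ_le_of_lt hji).eq_or_lt with rfl | hfar
  · exact join_lower_succ hi hj
  · exact join_lower_of_far hi hj hfar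

end GenomicTableau

/-- **Lemma (well-definedness of regularization).** For any genomic tableau `T` of shape
`λ`, the regularization algorithm terminates with a well-defined output: there is a unique
quasiYamanouchi genomic tableau reachable from `T` by regularization steps.  In other
words, regularization is a well-defined map `reg : Gen(λ) → QYGen(λ)`. -/
theorem regularization_wellDefined (lam : ℕ → ℕ) (hlam : IsPartitionFn lam)
    (T : GenomicTableau lam) :
    ∃! U : GenomicTableau lam, Relation.ReflTransGen RegStep T U ∧ IsQY U := by
  simp only [GenomicTableau.isQY_iff_forall_not_regStep]
  exact existsUnique_normalForm_of_locallyConfluent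
    (GenomicTableau.wellFounded_flip_regStep hlam) GenomicTableau.regStep_locallyConfluent T
end

section
/- The regularization map reg : Gen(λ) → QYGen(λ) is surjective, and its fixed points are exactly the quasiYamanouchi genomic tableaux: for T ∈ Gen(λ), reg(T) = T if and only if T ∈ QYGen(λ). -/
open scoped Classical

theorem IsQY.not_regStep {lam : ℕ → ℕ} {T T' : GenomicTableau lam} (hT : IsQY T) :
    ¬ RegStep T T' := by
  rintro ⟨i, hi, hiT, heast, -, -⟩
  obtain ⟨x, y, hx, hy, hxi, hyi, hxy⟩ := hT i hi hiT
  exact (heast x y hx hy hxi hyi).not_ge hxy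

theorem regularization_surjOn_and_fixedPoints_general (lam : ℕ → ℕ)
    (reg : GenomicTableau lam → GenomicTableau lam)
    (hreg : ∀ T, Relation.ReflTransGen RegStep T (reg T) ∧ IsQY (reg T)) :
    (∀ U : GenomicTableau lam, IsQY U → ∃ T, reg T = U) ∧
    (∀ T : GenomicTableau lam, reg T = T ↔ IsQY T) := by
  have reg_eq_self : ∀ T, IsQY T → reg T = T := fun T hT =>
    (Relation.reflTransGen_iff_eq fun _ => hT.not_regStep).1 (hreg T).1
  exact ⟨fun U hU => ⟨U, reg_eq_self U hU⟩, fun T => ⟨fun h => h ▸ (hreg T).2, reg_eq_self T⟩⟩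

/-- **Lemma.** The regularization map `reg : Gen(λ) → QYGen(λ)` (any map computing the
regularization algorithm) is surjective onto the quasiYamanouchi genomic tableaux, and its
fixed points are exactly the quasiYamanouchi genomic tableaux. -/
theorem regularization_surjOn_and_fixedPoints (lam : ℕ → ℕ) (hlam : IsPartitionFn lam)
    (reg : GenomicTableau lam → GenomicTableau lam)
    (hreg : ∀ T, Relation.ReflTransGen RegStep T (reg T) ∧ IsQY (reg T)) :
    (∀ U : GenomicTableau lam, IsQY U → ∃ T, reg T = U) ∧
    (∀ T : GenomicTableau lam, reg T = T ↔ IsQY T) :=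
  regularization_surjOn_and_fixedPoints_general lam reg hreg
end

section
/- Every gapless increasing tableau V of shape λ is Des(V)-Pieri-filled: for each i, the boxes of V with entries in the i-th block M_i(Des(V)) form a horizontal strip whose labels weakly increase from left to right. -/
open scoped Classical

/-! A non-descent `j` of `V` forces every `j` strictly west of every `j + 1`: otherwise some
`j + 1` would sit weakly north-west of a `j`. Every descent is a partial sum of `Des(V)`, so
no descent lies inside a block; as `V` is gapless, chaining these steps through
the intermediate entries shows that within a block a smaller entry always lies strictly west
of a larger one. Both the horizontal-strip and the weak-increase conditions follow. -/

namespace List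

theorem sum_take_le_sum_take (L : List ℕ) {k m : ℕ} (h : k ≤ m) :
    (L.take k).sum ≤ (L.take m).sum :=
  (take_sublist_take_left h).sum_le_sum fun _ _ => Nat.zero_le _

theorem sum_take_notMem_Ioo (L : List ℕ) (i k : ℕ) :
    (L.take k).sum ∉ Set.Ioo (L.take i).sum (L.take (i + 1)).sum := by
  rintro ⟨hlo, hhi⟩
  rcases le_or_gt k i with hki | hik
  · exact (sum_take_le_sum_take L hki).not_gt hlo
  · exact (sum_take_le_sum_take L hik).not_gt hhi

theorem add_sum_map_sub_zip_eq_getLastD {a : ℕ} {l : List ℕ} (h : (a :: l).IsChain (· ≤ ·)) :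
    a + ((l.zip (a :: l)).map fun p => p.1 - p.2).sum = l.getLastD a := by
  induction l generalizing a with
  | nil => simp
  | cons b t ih =>
    obtain ⟨hab, hc⟩ := isChain_cons_cons.mp h
    have := ih hc
    simp only [getLastD_cons, zip_cons_cons, map_cons, sum_cons]
    omega

theorem exists_add_sum_take_map_sub_zip_eq {a d : ℕ} {l : List ℕ}
    (h : (a :: l).IsChain (· ≤ ·)) (hd : d ∈ l) :
    ∃ k, a + (((l.zip (a :: l)).map fun p => p.1 - p.2).take k).sum = d := by
  induction l generalizing a with
  | nil => cases hd
  | cons b t ih =>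
    obtain ⟨hab, hc⟩ := isChain_cons_cons.mp h
    rcases mem_cons.mp hd with rfl | hd
    · exact ⟨1, by simp; omega⟩
    · obtain ⟨k, hk⟩ := ih hc hd
      refine ⟨k + 1, ?_⟩
      simp only [zip_cons_cons, map_cons, take_succ_cons, sum_cons]
      omega

end List

namespace IncreasingTableau

variable {lam : ℕ → ℕ} (T : IncreasingTableau lam)

theorem entry_le_entry {x y : ℕ × ℕ} (hy : InShape lam y) (h₁ : x.1 ≤ y.1) (h₂ : x.2 ≤ y.2) :
    T.entry x ≤ T.entry y := by
  have hmid : InShape lam (y.1, x.2) := lt_of_le_of_lt h₂ hy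
  calc T.entry x ≤ T.entry (y.1, x.2) := by
        rcases h₁.lt_or_eq with h | h
        · exact (T.col_strict _ _ _ h hmid).le
        · rw [← h]
    _ ≤ T.entry y := by
        rcases h₂.lt_or_eq with h | h
        · exact (T.row_strict _ _ _ h hy).le
        · rw [h]

theorem eq_of_entry_eq_of_snd_eq {x y : ℕ × ℕ} (hx : InShape lam x) (hy : InShape lam y)
    (he : T.entry x = T.entry y) (hc : x.2 = y.2) : x = y := by
  obtain ⟨r, c⟩ := x
  obtain ⟨r', c'⟩ := y
  obtain rfl : c = c' := hc
  rcases lt_trichotomy r r' with h | rfl | h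
  · exact absurd he (T.col_strict _ _ _ h hy).ne
  · rfl
  · exact absurd he (T.col_strict _ _ _ h hx).ne'

theorem snd_lt_snd_of_not_isDescent {j : ℕ} (hj : ¬ IsDescent T j) {x y : ℕ × ℕ}
    (hx : InShape lam x) (hy : InShape lam y) (hex : T.entry x = j) (hey : T.entry y = j + 1) :
    x.2 < y.2 := by
  by_contra! hcol
  have hrow : y.1 ≤ x.1 := by
    by_contra! hrow
    exact hj ⟨x, y, hx, hy, hex, hey, hrow⟩
  have := T.entry_le_entry hx hrow hcol
  omega

theorem snd_lt_snd_of_forall_not_isDescent (hT : Gapless T) {x y : ℕ × ℕ}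
    (hx : InShape lam x) (hy : InShape lam y) (hlt : T.entry x < T.entry y)
    (hmax : T.entry y ≤ maxEntryInc T)
    (hj : ∀ j, T.entry x ≤ j → j < T.entry y → ¬ IsDescent T j) : x.2 < y.2 := by
  obtain ⟨k, hk⟩ : ∃ k, T.entry y = T.entry x + k + 1 := ⟨T.entry y - T.entry x - 1, by omega⟩
  induction k generalizing x with
  | zero => exact T.snd_lt_snd_of_not_isDescent (hj _ le_rfl hlt) hx hy rfl hk
  | succ k ih =>
    obtain ⟨z, hz, hze⟩ := hT (T.entry x + 1) (by omega) (by omega)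
    have hxz := T.snd_lt_snd_of_not_isDescent (hj _ le_rfl hlt) hx hz rfl hze
    have hzy := ih hz (by omega) (fun j h₁ h₂ => hj j (by omega) h₂) (by omega)
    omega

noncomputable def descentStops : List ℕ :=
  ((Finset.range (maxEntryInc T)).filter (IsDescent T)).sort (· ≤ ·) ++ [maxEntryInc T]

theorem descComp_eq :
    descComp T = (T.descentStops.zip (0 :: T.descentStops)).map fun p => p.1 - p.2 :=
  rfl

theorem isChain_zero_cons_descentStops : (0 :: T.descentStops).IsChain (· ≤ ·) := by
  rw [List.isChain_iff_pairwise, List.pairwise_cons]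
  refine ⟨fun _ _ => Nat.zero_le _, List.pairwise_append.mpr
    ⟨Finset.pairwise_sort _ _, List.pairwise_singleton _ _, ?_⟩⟩
  intro a ha b hb
  rw [Finset.mem_sort, Finset.mem_filter, Finset.mem_range] at ha
  rw [List.mem_singleton.mp hb]
  exact ha.1.le

theorem sum_descComp : (descComp T).sum = maxEntryInc T := by
  have := List.add_sum_map_sub_zip_eq_getLastD T.isChain_zero_cons_descentStops
  rwa [zero_add, ← descComp_eq, descentStops, List.getLastD_eq_getLast?,
    List.getLast?_concat, Option.getD_some] at this

theorem exists_sum_take_descComp_eq {j : ℕ} (hj : IsDescent T j) (hjn : j < maxEntryInc T) :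
    ∃ k, ((descComp T).take k).sum = j := by
  have hmem : j ∈ T.descentStops :=
    List.mem_append_left _ (by simp [Finset.mem_sort, hj, hjn])
  simpa [descComp_eq] using
    List.exists_add_sum_take_map_sub_zip_eq T.isChain_zero_cons_descentStops hmem

theorem le_maxEntryInc_of_inBlock {i e : ℕ} (he : InBlock (descComp T) i e) :
    e ≤ maxEntryInc T :=
  calc e ≤ ((descComp T).take (i + 1)).sum := he.2
    _ ≤ (descComp T).sum := (List.take_sublist _ _).sum_le_sum fun _ _ => Nat.zero_le _
    _ = maxEntryInc T := T.sum_descComp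

theorem not_isDescent_of_inBlock {i e f j : ℕ} (he : InBlock (descComp T) i e)
    (hf : InBlock (descComp T) i f) (hej : e ≤ j) (hjf : j < f) : ¬ IsDescent T j := by
  intro hj
  obtain ⟨k, hk⟩ := T.exists_sum_take_descComp_eq hj
    (hjf.trans_le (T.le_maxEntryInc_of_inBlock hf))
  exact (descComp T).sum_take_notMem_Ioo i k ⟨by have := he.1; omega, by have := hf.2; omega⟩

theorem snd_lt_snd_of_inBlock (hT : Gapless T) {i : ℕ} {x y : ℕ × ℕ}
    (hx : InShape lam x) (hy : InShape lam y) (hbx : InBlock (descComp T) i (T.entry x))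
    (hby : InBlock (descComp T) i (T.entry y)) (hlt : T.entry x < T.entry y) : x.2 < y.2 :=
  T.snd_lt_snd_of_forall_not_isDescent hT hx hy hlt (T.le_maxEntryInc_of_inBlock hby)
    fun _ hxj hjy => T.not_isDescent_of_inBlock hbx hby hxj hjy

end IncreasingTableau

theorem gaplessInc_pieriFilled_general (lam : ℕ → ℕ)
    (V : IncreasingTableau lam) (hV : Gapless V) (i : ℕ) :
    (∀ x y, InShape lam x → InShape lam y →
      InBlock (descComp V) i (V.entry x) → InBlock (descComp V) i (V.entry y) →
      x.2 = y.2 → x = y) ∧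
    (∀ x y, InShape lam x → InShape lam y →
      InBlock (descComp V) i (V.entry x) → InBlock (descComp V) i (V.entry y) →
      x.2 < y.2 → V.entry x ≤ V.entry y) := by
  refine ⟨fun x y hx hy hbx hby hcol => ?_, fun x y hx hy hbx hby hcol => ?_⟩
  · refine V.eq_of_entry_eq_of_snd_eq hx hy ?_ hcol
    by_contra hne
    rcases Ne.lt_or_gt hne with hlt | hlt
    · exact (V.snd_lt_snd_of_inBlock hV hx hy hbx hby hlt).ne hcol
    · exact (V.snd_lt_snd_of_inBlock hV hy hx hby hbx hlt).ne' hcol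
  · by_contra! hlt
    exact lt_asymm hcol (V.snd_lt_snd_of_inBlock hV hy hx hby hbx hlt)

/-- **Lemma.** Every gapless increasing tableau `V` of shape `λ` is `Des(V)`-Pieri-filled:
for each `i`, the boxes of `V` with entries in the `i`-th block `M_i(Des(V))` form a
horizontal strip (at most one box in any column) whose labels weakly increase from left to
right. -/
theorem gaplessInc_pieriFilled (lam : ℕ → ℕ) (hlam : IsPartitionFn lam)
    (V : IncreasingTableau lam) (hV : Gapless V) (i : ℕ) :
    (∀ x y, InShape lam x → InShape lam y →
      InBlock (descComp V) i (V.entry x) → InBlock (descComp V) i (V.entry y) →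
      x.2 = y.2 → x = y) ∧
    (∀ x y, InShape lam x → InShape lam y →
      InBlock (descComp V) i (V.entry x) → InBlock (descComp V) i (V.entry y) →
      x.2 < y.2 → V.entry x ≤ V.entry y) :=
  gaplessInc_pieriFilled_general lam V hV i
end
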